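/- arXiv:1902.05593 — 3 statements merged into one kernel-verified Lean document; each statement's English description precedes it below -/
import Mathlib

section
/- Let X be an n-dimensional real Banach space and let {(e_i, e_i*) : i = 1,…,n} be an Auerbach basis of X. Then the set A = {±e_i : i = 1,…,n} (which consists of 2n unit vectors) is a bounded and separated antipodal subset of X with constant d = 1; consequently H_α(X) ≥ 2n. -/
/-!
Write `x = ε • b i` and `y = η • b j` with `|ε| = |η| = 1`. The separating functional is
`ε • f i` when `i = j` (then `η = -ε`) and `(ε • f i - η • f j) / 2` when `i ≠ j`: it has norm
at most `1`, takes the values `c` and `-c` at `x` and `y` with `2c ≥ 1`, and is bounded by `c`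
in absolute value on `A`, since by biorthogonality each point of `A` has exactly one nonzero
coordinate `f k z`, equal to `±1`.
For `2n ≤ H_α(X)` the defining set of cardinalities must be bounded (an unbounded `sSup` in `ℕ`
is `0`): antipodal sets are `1`-separated, so their size is bounded by the size of a finite
`1/4`-cover of the compact unit sphere.
-/

open Metric

noncomputable section

/-- `S` is a bounded and separated antipodal set with constant `d`. -/
def IsBSA {X : Type*} [NormedAddCommGroup X] [NormedSpace ℝ X] (S : Set X) (d : ℝ) : Prop :=
  S ⊆ closedBall (0 : X) 1 ∧
    ∀ x ∈ S, ∀ y ∈ S, x ≠ y → ∃ f : X →L[ℝ] ℝ, ‖f‖ ≤ 1 ∧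
      d ≤ f x - f y ∧ ∀ z ∈ S, f y ≤ f z ∧ f z ≤ f x

/-- The antipodality condition with gap `1` entering the definition of `H_α(X)`. -/
def AntipProp {X : Type*} [NormedAddCommGroup X] [NormedSpace ℝ X] (S : Set X) : Prop :=
  ∀ x ∈ S, ∀ y ∈ S, x ≠ y → ∃ f : X →L[ℝ] ℝ, ‖f‖ ≤ 1 ∧
    1 ≤ f x - f y ∧ ∀ z ∈ S, f y ≤ f z ∧ f z ≤ f x

/-- The antipodal Hadwiger number `H_α(X)`. -/
def Halpha (X : Type*) [NormedAddCommGroup X] [NormedSpace ℝ X] : ℕ :=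
  sSup {k : ℕ | ∃ S : Finset X, S.card = k ∧ (S : Set X) ⊆ sphere (0 : X) 1 ∧
    AntipProp (S : Set X)}

open scoped NNReal

theorem Metric.bddAbove_card_of_isSeparated {X : Type*} [PseudoMetricSpace X] {K : Set X}
    (hK : TotallyBounded K) {ε : ℝ≥0} (hε : ε ≠ 0) :
    BddAbove {k : ℕ | ∃ S : Finset X, S.card = k ∧ (S : Set X) ⊆ K ∧
      IsSeparated ε (S : Set X)} := by
  obtain ⟨N, -, hNfin, hNcov⟩ := exists_finite_isCover_of_totallyBounded (ε := ε / 2)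
    (by simpa using hε) hK
  refine ⟨N.ncard, ?_⟩
  rintro _ ⟨S, rfl, hSK, hSsep⟩
  have : (S : Set X).encard ≤ N.encard :=
    calc (S : Set X).encard ≤ packingNumber (2 * (ε / 2)) K := by
          rw [mul_div_cancel₀ _ two_ne_zero]
          exact hSsep.encard_le_packingNumber hSK
      _ ≤ externalCoveringNumber (ε / 2) K :=
          packingNumber_two_mul_le_externalCoveringNumber _ _
      _ ≤ N.encard := hNcov.externalCoveringNumber_le_encard
  rw [← hNfin.cast_ncard_eq, Set.encard_coe_eq_coe_finsetCard] at this
  exact_mod_cast this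

section Antipodal

variable {X : Type*} [NormedAddCommGroup X] [NormedSpace ℝ X]

theorem exists_antipodal_functional {S : Set X} {x y : X} (g : X →L[ℝ] ℝ) (hg : ‖g‖ ≤ 1)
    {c : ℝ} (hc : 1 ≤ 2 * c) (hx : g x = c) (hy : g y = -c) (hS : ∀ z ∈ S, |g z| ≤ c) :
    ∃ g : X →L[ℝ] ℝ, ‖g‖ ≤ 1 ∧ 1 ≤ g x - g y ∧ ∀ z ∈ S, g y ≤ g z ∧ g z ≤ g x :=
  ⟨g, hg, by linarith, fun z hz ↦ by
    rw [hx, hy]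
    exact abs_le.1 (hS z hz)⟩

theorem AntipProp.one_le_dist {S : Set X} (hS : AntipProp S) {x y : X} (hx : x ∈ S) (hy : y ∈ S)
    (hxy : x ≠ y) : 1 ≤ dist x y := by
  obtain ⟨g, hg, hgap, -⟩ := hS x hx y hy hxy
  calc (1 : ℝ) ≤ g (x - y) := by rwa [map_sub]
    _ ≤ ‖g‖ * ‖x - y‖ := (le_abs_self _).trans (g.le_opNorm _)
    _ ≤ dist x y := by
      rw [dist_eq_norm]
      exact mul_le_of_le_one_left (norm_nonneg _) hg

theorem AntipProp.isSeparated {S : Set X} (hS : AntipProp S) : IsSeparated (1 / 2) S := by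
  intro x hx y hy hxy
  rw [edist_dist]
  refine (ENNReal.lt_ofReal_iff_toReal_lt (by norm_num)).2 ?_
  norm_num
  linarith [hS.one_le_dist hx hy hxy]

theorem bddAbove_setOf_antipProp [FiniteDimensional ℝ X] :
    BddAbove {k : ℕ | ∃ S : Finset X, S.card = k ∧ (S : Set X) ⊆ sphere (0 : X) 1 ∧
      AntipProp (S : Set X)} := by
  refine BddAbove.mono ?_ <| bddAbove_card_of_isSeparated
    (isCompact_sphere (0 : X) 1).totallyBounded (ε := 1 / 2) (by norm_num)
  rintro _ ⟨S, hcard, hS, hanti⟩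
  exact ⟨S, hcard, hS, by simpa using hanti.isSeparated⟩

theorem ncard_le_halpha [FiniteDimensional ℝ X] {S : Set X} (hfin : S.Finite)
    (hS : S ⊆ sphere 0 1) (hanti : AntipProp S) : S.ncard ≤ Halpha X :=
  le_csSup bddAbove_setOf_antipProp
    ⟨hfin.toFinset, (Set.ncard_eq_toFinset_card S hfin).symm, by simpa using hS,
      by simpa using hanti⟩

end Antipodal

section Biorthogonal

variable {X : Type*} [NormedAddCommGroup X] {ι : Type*} {b : ι → X}

theorem range_union_range_neg_subset_sphere (hb : ∀ i, ‖b i‖ = 1) :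
    Set.range b ∪ Set.range (fun i ↦ -b i) ⊆ sphere 0 1 := by
  rintro _ (⟨i, rfl⟩ | ⟨i, rfl⟩) <;> simp [hb]

variable [NormedSpace ℝ X]

theorem exists_abs_eq_one_smul_of_mem_range_union_range_neg {z : X}
    (hz : z ∈ Set.range b ∪ Set.range (fun i ↦ -b i)) : ∃ i, ∃ ε : ℝ, |ε| = 1 ∧ z = ε • b i := by
  rcases hz with ⟨i, rfl⟩ | ⟨i, rfl⟩
  · exact ⟨i, 1, abs_one, (one_smul ℝ _).symm⟩
  · exact ⟨i, -1, by simp, (neg_one_smul ℝ _).symm⟩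

variable [DecidableEq ι] {f : ι → X →L[ℝ] ℝ} (hbf : ∀ i j, f i (b j) = if i = j then 1 else 0)
include hbf

theorem injective_of_biorthogonal : Function.Injective b := by
  intro i j hij
  have := hbf i j
  rw [← hij, hbf, if_pos rfl] at this
  by_contra h
  simp [h] at this

theorem disjoint_range_range_neg_of_biorthogonal :
    Disjoint (Set.range b) (Set.range fun i ↦ -b i) := by
  rw [Set.disjoint_left]
  rintro _ ⟨i, rfl⟩ ⟨j, hj⟩
  have := congrArg (f i) hj
  rw [map_neg, hbf, hbf, if_pos rfl] at this
  split_ifs at this <;> norm_num at this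

theorem ncard_range_union_range_neg [Finite ι] :
    (Set.range b ∪ Set.range fun i ↦ -b i).ncard = 2 * Nat.card ι := by
  have hinj := injective_of_biorthogonal hbf
  rw [Set.ncard_union_eq (disjoint_range_range_neg_of_biorthogonal hbf),
    Set.ncard_range_of_injective hinj,
    Set.ncard_range_of_injective (f := fun i ↦ -b i) (neg_injective.comp hinj), two_mul]

theorem exists_abs_apply_eq_ite_of_mem {z : X} (hz : z ∈ Set.range b ∪ Set.range fun i ↦ -b i) :
    ∃ k, ∀ i, |f i z| = if i = k then 1 else 0 := by
  obtain ⟨k, ε, hε, rfl⟩ := exists_abs_eq_one_smul_of_mem_range_union_range_neg hz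
  exact ⟨k, fun i ↦ by split_ifs with h <;> simp [hbf, h, hε]⟩

theorem abs_apply_le_one_of_mem {z : X} (hz : z ∈ Set.range b ∪ Set.range fun i ↦ -b i) (i : ι) :
    |f i z| ≤ 1 := by
  obtain ⟨k, hk⟩ := exists_abs_apply_eq_ite_of_mem hbf hz
  rw [hk]
  split_ifs <;> norm_num

theorem abs_apply_add_abs_apply_le_one_of_mem {z : X}
    (hz : z ∈ Set.range b ∪ Set.range fun i ↦ -b i) {i j : ι} (hij : i ≠ j) :
    |f i z| + |f j z| ≤ 1 := by
  obtain ⟨k, hk⟩ := exists_abs_apply_eq_ite_of_mem hbf hz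
  rw [hk, hk]
  split_ifs with hi hj <;> first | exact absurd (hi.trans hj.symm) hij | norm_num

theorem antipProp_range_union_range_neg (hf : ∀ i, ‖f i‖ ≤ 1) :
    AntipProp (Set.range b ∪ Set.range fun i ↦ -b i) := by
  intro x hx y hy hxy
  obtain ⟨i, ε, hε, rfl⟩ := exists_abs_eq_one_smul_of_mem_range_union_range_neg hx
  obtain ⟨j, η, hη, rfl⟩ := exists_abs_eq_one_smul_of_mem_range_union_range_neg hy
  have hεε : ε * ε = 1 := by rw [← abs_mul_abs_self, hε, one_mul]
  have hηη : η * η = 1 := by rw [← abs_mul_abs_self, hη, one_mul]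
  by_cases hij : i = j
  · subst hij
    have hηε : η = -ε := by
      rcases abs_eq_abs.1 (hη.trans hε.symm) with rfl | h
      · exact absurd rfl hxy
      · exact h
    refine exists_antipodal_functional (ε • f i) ?_ (c := 1) (by norm_num) ?_ ?_ ?_
    · simpa [norm_smul, hε] using hf i
    · simp [hbf, hεε]
    · simp [hbf, hηε, hεε]
    · intro z hz
      simpa [abs_mul, hε] using abs_apply_le_one_of_mem hbf hz i
  · refine exists_antipodal_functional ((1 / 2 : ℝ) • (ε • f i - η • f j)) ?_ (c := 1 / 2)
      (by norm_num) ?_ ?_ ?_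
    · calc ‖(1 / 2 : ℝ) • (ε • f i - η • f j)‖ = 1 / 2 * ‖ε • f i - η • f j‖ := by
            rw [norm_smul]; norm_num
        _ ≤ 1 / 2 * (‖ε • f i‖ + ‖η • f j‖) := by gcongr; exact norm_sub_le _ _
        _ ≤ 1 / 2 * (1 + 1) := by gcongr <;> simpa [norm_smul, hε, hη] using hf _
        _ = 1 := by norm_num
    · simp [hbf, Ne.symm hij]
      linear_combination hεε / 2
    · simp [hbf, hij]
      linear_combination hηη / 2
    · intro z hz
      calc |((1 / 2 : ℝ) • (ε • f i - η • f j)) z| = 1 / 2 * |ε * f i z - η * f j z| := by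
            simp [abs_mul]
        _ ≤ 1 / 2 * (|f i z| + |f j z|) := by
            gcongr
            simpa [abs_mul, hε, hη] using abs_sub (ε * f i z) (η * f j z)
        _ ≤ 1 / 2 := by
            linarith [abs_apply_add_abs_apply_le_one_of_mem hbf hz hij]

end Biorthogonal

theorem auerbach_pm_isBSA_one_general (n : ℕ) (X : Type*) [NormedAddCommGroup X] [NormedSpace ℝ X]
    (b : Module.Basis (Fin n) ℝ X) (f : Fin n → (X →L[ℝ] ℝ))
    (hb : ∀ i, ‖b i‖ = 1) (hf : ∀ i, ‖f i‖ = 1)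
    (hbf : ∀ i j, f i (b j) = if i = j then 1 else 0)
    (A : Set X) (hA : A = Set.range (fun i => b i) ∪ Set.range (fun i => -(b i))) :
    A.ncard = 2 * n ∧ A ⊆ sphere (0 : X) 1 ∧ IsBSA A 1 ∧ 2 * n ≤ Halpha X := by
  have : FiniteDimensional ℝ X := b.finiteDimensional_of_finite
  subst hA
  have hcard := ncard_range_union_range_neg hbf
  have hsphere := range_union_range_neg_subset_sphere hb
  have hanti := antipProp_range_union_range_neg hbf fun i ↦ (hf i).le
  rw [Nat.card_fin] at hcard
  refine ⟨hcard, hsphere, ⟨hsphere.trans sphere_subset_closedBall, hanti⟩, ?_⟩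
  exact hcard ▸ ncard_le_halpha (Set.toFinite _) hsphere hanti

/-- If `{(b i, f i)}` is an Auerbach basis of an `n`-dimensional real
Banach space `X`, then `A = {± b i}` consists of `2n` unit vectors, is a bounded and
separated antipodal set with constant `d = 1`, and hence `H_α(X) ≥ 2n`. -/
theorem auerbach_pm_isBSA_one (n : ℕ) (X : Type*) [NormedAddCommGroup X] [NormedSpace ℝ X]
    [FiniteDimensional ℝ X] (hdim : Module.finrank ℝ X = n)
    (b : Module.Basis (Fin n) ℝ X) (f : Fin n → (X →L[ℝ] ℝ))
    (hb : ∀ i, ‖b i‖ = 1) (hf : ∀ i, ‖f i‖ = 1)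
    (hbf : ∀ i j, f i (b j) = if i = j then 1 else 0)
    (A : Set X) (hA : A = Set.range (fun i => b i) ∪ Set.range (fun i => -(b i))) :
    A.ncard = 2 * n ∧ A ⊆ sphere (0 : X) 1 ∧ IsBSA A 1 ∧ 2 * n ≤ Halpha X :=
  auerbach_pm_isBSA_one_general n X b f hb hf hbf A hA

end
end

section
/- Let n ≥ 2 and 1 < p < ∞ with p > log₂ n. Then H'_α(ℓ_p^n) = 2^n (and hence also H_α(ℓ_p^n) = 2^n); in particular the set S' = n^{-1/p}·{−1,1}^n is a bounded and separated antipodal subset of the unit sphere of ℓ_p^n of cardinality 2^n with constant d = 2/n^{1/p} > 1. -/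
open Metric
open scoped Classical

noncomputable section

/-- The strict antipodality condition (with gap `> 1`). -/
def StrictAntipProp {X : Type*} [NormedAddCommGroup X] [NormedSpace ℝ X] (S : Set X) : Prop :=
  ∀ x ∈ S, ∀ y ∈ S, x ≠ y → ∃ f : X →L[ℝ] ℝ, ‖f‖ ≤ 1 ∧
    1 < f x - f y ∧ ∀ z ∈ S, f y ≤ f z ∧ f z ≤ f x

/-- The strict antipodal Hadwiger number `H'_α(X)`. -/
def strictHalpha (X : Type*) [NormedAddCommGroup X] [NormedSpace ℝ X] : ℕ :=
  sSup {k : ℕ | ∃ S : Finset X, S.card = k ∧ (S : Set X) ⊆ sphere (0 : X) 1 ∧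
    StrictAntipProp (S : Set X)}

/-! The sign vectors `±n^{-1/p}` lie on the unit sphere of `ℓ_p^n`, and a signed coordinate
functional separates any two of them with gap `2 n^{-1/p}`, which exceeds `1` exactly when
`n < 2^p`. That no antipodal set has more than `2^n` points is the Danzer–Grünbaum theorem:
if `S` spans and `U` is the interior of its convex hull, the homothets `x + ½(U - x)`, `x ∈ S`,
lie in `U`, have volume `2^{-n} vol U`, and are pairwise disjoint since the functional
separating `x` and `y` puts them on opposite sides of the midpoint hyperplane. A set that does
not span lives, after translation, in its lower-dimensional vector span. -/

open Module MeasureTheory Set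
open scoped ENNReal Pointwise

section Antipodal

variable {E : Type*} [NormedAddCommGroup E] [NormedSpace ℝ E]

def IsAntipodal (S : Set E) : Prop :=
  ∀ x ∈ S, ∀ y ∈ S, x ≠ y → ∃ f : E →L[ℝ] ℝ, f y < f x ∧ ∀ z ∈ S, f y ≤ f z ∧ f z ≤ f x

lemma ContinuousLinearMap.mapsTo_interior_convexHull {f : E →L[ℝ] ℝ} (hf : f ≠ 0) {S : Set E}
    {a b : ℝ} (hS : MapsTo f S (Icc a b)) :
    MapsTo f (interior (convexHull ℝ S)) (Ioo a b) := by
  have hK : convexHull ℝ S ⊆ f ⁻¹' Icc a b :=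
    convexHull_min hS ((convex_Icc a b).linear_preimage f.toLinearMap)
  rw [← interior_Icc, mapsTo_iff_image_subset]
  refine interior_maximal ?_ (f.isOpenMap_of_ne_zero hf _ isOpen_interior)
  exact image_subset_iff.2 (interior_subset.trans hK)

lemma Convex.homothety_image_interior_subset {K : Set E} (hK : Convex ℝ K) {x : E} (hx : x ∈ K) :
    AffineMap.homothety x (2⁻¹ : ℝ) '' interior K ⊆ interior K := by
  rintro _ ⟨k, hk, rfl⟩
  rw [AffineMap.homothety_eq_lineMap, AffineMap.lineMap_apply_module]
  exact hK.combo_self_interior_mem_interior hx hk (by norm_num) (by norm_num) (by norm_num)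

lemma IsAntipodal.pairwiseDisjoint_homothety {S : Set E} (hS : IsAntipodal S) :
    S.PairwiseDisjoint fun x ↦ AffineMap.homothety x (2⁻¹ : ℝ) '' interior (convexHull ℝ S) := by
  intro x hx y hy hxy
  obtain ⟨f, hlt, hf⟩ := hS x hx y hy hxy
  have hf0 : f ≠ 0 := by rintro rfl; simp at hlt
  have hU := f.mapsTo_interior_convexHull hf0 (a := f y) (b := f x) fun z hz ↦ hf z hz
  have hhom : ∀ c k, f (AffineMap.homothety c (2⁻¹ : ℝ) k) = (f c + f k) / 2 := by
    intro c k
    rw [AffineMap.homothety_eq_lineMap, AffineMap.lineMap_apply_module, map_add, map_smul,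
      map_smul, smul_eq_mul, smul_eq_mul]
    ring
  refine disjoint_left.2 ?_
  rintro _ ⟨k, hk, rfl⟩ ⟨k', hk', hkk'⟩
  have h := congrArg f hkk'
  rw [hhom, hhom] at h
  linarith [(hU hk).1, (hU hk').2]

lemma IsAntipodal.card_le_of_affineSpan_eq_top [FiniteDimensional ℝ E] {S : Finset E}
    (hS : IsAntipodal (S : Set E)) (hspan : affineSpan ℝ (S : Set E) = ⊤) :
    S.card ≤ 2 ^ finrank ℝ E := by
  borelize E
  set μ : Measure E := Measure.addHaar
  set U := interior (convexHull ℝ (S : Set E))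
  have hUpos : μ U ≠ 0 := by
    refine (isOpen_interior.measure_pos μ ?_).ne'
    rwa [(convex_convexHull ℝ _).interior_nonempty_iff_affineSpan_eq_top, affineSpan_convexHull]
  have hUfin : μ U ≠ ∞ :=
    (measure_mono interior_subset).trans_lt
      ((S.finite_toSet.isCompact_convexHull ℝ).measure_lt_top) |>.ne
  have hscale : ∀ x, μ (AffineMap.homothety x (2⁻¹ : ℝ) '' U) = (2 ^ finrank ℝ E)⁻¹ * μ U := by
    intro x
    rw [Measure.addHaar_image_homothety, abs_of_pos (by positivity), inv_pow,
      ENNReal.ofReal_inv_of_pos (by positivity), ENNReal.ofReal_pow zero_le_two]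
    simp
  have hcount : (S.card : ℝ≥0∞) * (2 ^ finrank ℝ E)⁻¹ * μ U ≤ 1 * μ U :=
    calc (S.card : ℝ≥0∞) * (2 ^ finrank ℝ E)⁻¹ * μ U
        = ∑ x ∈ S, μ (AffineMap.homothety x (2⁻¹ : ℝ) '' U) := by
          simp [hscale, mul_assoc]
      _ = μ (⋃ x ∈ S, AffineMap.homothety x (2⁻¹ : ℝ) '' U) :=
          (measure_biUnion_finset hS.pairwiseDisjoint_homothety fun x _ ↦
            (AffineMap.homothety_isOpenMap x _ (by norm_num) U isOpen_interior).measurableSet).symm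
      _ ≤ 1 * μ U := by
          rw [one_mul]
          exact measure_mono (iUnion₂_subset fun x hx ↦
            (convex_convexHull ℝ _).homothety_image_interior_subset (subset_convexHull ℝ _ hx))
  have := ENNReal.le_inv_iff_mul_le.2 ((ENNReal.mul_le_mul_iff_left hUpos hUfin).1 hcount)
  exact_mod_cast inv_inv (2 ^ finrank ℝ E : ℝ≥0∞) ▸ this

lemma IsAntipodal.vadd {S : Set E} (hS : IsAntipodal S) (v : E) : IsAntipodal (v +ᵥ S) := by
  rintro _ ⟨x, hx, rfl⟩ _ ⟨y, hy, rfl⟩ hxy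
  obtain ⟨f, hlt, hf⟩ := hS x hx y hy (by rintro rfl; exact hxy rfl)
  refine ⟨f, by simpa using hlt, ?_⟩
  rintro _ ⟨z, hz, rfl⟩
  simpa using hf z hz

lemma IsAntipodal.preimage {F : Type*} [NormedAddCommGroup F] [NormedSpace ℝ F] {S : Set E}
    (hS : IsAntipodal S) {g : F →L[ℝ] E} (hg : Function.Injective g) : IsAntipodal (g ⁻¹' S) := by
  intro x hx y hy hxy
  obtain ⟨f, hlt, hf⟩ := hS (g x) hx (g y) hy (hg.ne hxy)
  exact ⟨f.comp g, hlt, fun z hz ↦ hf (g z) hz⟩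

theorem IsAntipodal.card_le_two_pow_finrank [FiniteDimensional ℝ E] {S : Finset E}
    (hS : IsAntipodal (S : Set E)) : S.card ≤ 2 ^ finrank ℝ E := by
  induction h : finrank ℝ E using Nat.strong_induction_on generalizing E with
  | _ d ih =>
  by_cases hspan : affineSpan ℝ (S : Set E) = ⊤
  · exact h ▸ hS.card_le_of_affineSpan_eq_top hspan
  obtain rfl | ⟨x₀, hx₀⟩ := S.eq_empty_or_nonempty
  · simp
  set V := vectorSpan ℝ (S : Set E)
  have hV : finrank ℝ V < d := h ▸ Submodule.finrank_lt fun hV ↦ hspan <|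
    (AffineSubspace.affineSpan_eq_top_iff_vectorSpan_eq_top_of_nonempty ℝ E E ⟨x₀, hx₀⟩).2 hV
  have hmem : ∀ z ∈ -x₀ +ᵥ S, z ∈ Set.range ((↑) : V → E) := by
    simp only [Finset.mem_vadd_finset, vadd_eq_add, forall_exists_index, and_imp,
      forall_apply_eq_imp_iff₂]
    intro x hx
    exact ⟨⟨_, vsub_mem_vectorSpan ℝ hx hx₀⟩, by simp [vsub_eq_sub, neg_add_eq_sub]⟩
  set S' : Finset V := (-x₀ +ᵥ S).preimage Subtype.val Subtype.val_injective.injOn with hS'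
  have hcard : S'.card = S.card := by
    rw [hS', Finset.card_preimage, Finset.filter_true_of_mem hmem, Finset.card_vadd_finset]
  have hS' : IsAntipodal (S' : Set V) := by
    rw [hS', Finset.coe_preimage, Finset.coe_vadd_finset]
    exact (hS.vadd _).preimage (g := V.subtypeL) Subtype.val_injective
  calc S.card = S'.card := hcard.symm
    _ ≤ 2 ^ finrank ℝ V := ih _ hV hS' rfl
    _ ≤ 2 ^ d := Nat.pow_le_pow_right two_pos hV.le

end Antipodal

section Hadwiger

variable {E : Type*} [NormedAddCommGroup E] [NormedSpace ℝ E]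

lemma AntipProp.isAntipodal {S : Set E} (h : AntipProp S) : IsAntipodal S := fun x hx y hy hxy ↦
  let ⟨f, _, hgap, hf⟩ := h x hx y hy hxy
  ⟨f, by linarith, hf⟩

lemma StrictAntipProp.antipProp {S : Set E} (h : StrictAntipProp S) : AntipProp S :=
  fun x hx y hy hxy ↦
  let ⟨f, hf1, hgap, hf⟩ := h x hx y hy hxy
  ⟨f, hf1, hgap.le, hf⟩

lemma IsBSA.strictAntipProp {S : Set E} {d : ℝ} (h : IsBSA S d) (hd : 1 < d) : StrictAntipProp S :=
  fun x hx y hy hxy ↦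
  let ⟨f, hf1, hgap, hf⟩ := h.2 x hx y hy hxy
  ⟨f, hf1, hd.trans_le hgap, hf⟩

variable [FiniteDimensional ℝ E] {n : ℕ} {S : Finset E}

lemma Halpha_eq_two_pow (hE : finrank ℝ E = n) (hS : (S : Set E) ⊆ sphere 0 1)
    (hcard : S.card = 2 ^ n) (hA : AntipProp (S : Set E)) : Halpha E = 2 ^ n :=
  IsGreatest.csSup_eq ⟨⟨S, hcard, hS, hA⟩, by
    rintro _ ⟨T, rfl, -, hT⟩
    exact hE ▸ hT.isAntipodal.card_le_two_pow_finrank⟩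

lemma strictHalpha_eq_two_pow (hE : finrank ℝ E = n) (hS : (S : Set E) ⊆ sphere 0 1)
    (hcard : S.card = 2 ^ n) (hA : StrictAntipProp (S : Set E)) : strictHalpha E = 2 ^ n :=
  IsGreatest.csSup_eq ⟨⟨S, hcard, hS, hA⟩, by
    rintro _ ⟨T, rfl, -, hT⟩
    exact hE ▸ hT.antipProp.isAntipodal.card_le_two_pow_finrank⟩

end Hadwiger

section SignVectors

variable {ι : Type*} (p : ℝ≥0∞)

def signVector (c : ℝ) (σ : ι → Bool) : PiLp p (fun _ : ι ↦ ℝ) :=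
  WithLp.toLp p fun i ↦ (if σ i then 1 else -1) * c

variable {p}

lemma norm_signVector_apply (c : ℝ) (σ : ι → Bool) (i : ι) : ‖signVector p c σ i‖ = |c| := by
  cases h : σ i <;> simp [signVector, h]

lemma signVector_injective {c : ℝ} (hc : c ≠ 0) :
    Function.Injective (signVector (ι := ι) p c) := by
  intro σ τ h
  funext i
  have hi := congrArg (fun v ↦ v i) h
  cases hσ : σ i <;> cases hτ : τ i <;> simp [signVector, hσ, hτ] at hi ⊢ <;> exact hc (by linarith)

variable [Fintype ι] [Fact (1 ≤ p)]

lemma norm_signVector (hp : p ≠ ∞) (c : ℝ) (σ : ι → Bool) :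
    ‖signVector p c σ‖ = (Fintype.card ι : ℝ) ^ (1 / p.toReal) * |c| := by
  have hp0 : 0 < p.toReal :=
    ENNReal.toReal_pos (zero_lt_one.trans_le Fact.out).ne' hp
  rw [PiLp.norm_eq_sum hp0]
  simp only [norm_signVector_apply, Finset.sum_const, Finset.card_univ, nsmul_eq_mul]
  rw [Real.mul_rpow (by positivity) (by positivity), ← Real.rpow_mul (abs_nonneg c),
    mul_one_div_cancel hp0.ne', Real.rpow_one]

lemma exists_dual_signVector {c : ℝ} (hc : 0 < c) {σ τ : ι → Bool} (hστ : σ ≠ τ) :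
    ∃ f : PiLp p (fun _ : ι ↦ ℝ) →L[ℝ] ℝ, ‖f‖ ≤ 1 ∧
      f (signVector p c σ) - f (signVector p c τ) = 2 * c ∧
      ∀ ρ, f (signVector p c τ) ≤ f (signVector p c ρ) ∧
        f (signVector p c ρ) ≤ f (signVector p c σ) := by
  obtain ⟨i, hi⟩ := Function.ne_iff.1 hστ
  set ε : ℝ := if σ i then 1 else -1
  set f := ε • PiLp.proj p (fun _ : ι ↦ ℝ) (𝕜 := ℝ) i
  have hf : ∀ ρ, f (signVector p c ρ) = if ρ i = σ i then c else -c := by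
    intro ρ
    cases hσ : σ i <;> cases hρ : ρ i <;> simp [f, ε, signVector, hσ, hρ]
  refine ⟨f, ?_, ?_, fun ρ ↦ ?_⟩
  · refine ContinuousLinearMap.opNorm_le_bound _ zero_le_one fun x ↦ ?_
    have hε : ‖ε‖ = 1 := by cases h : σ i <;> simp [ε, h]
    simpa [f, norm_smul, hε] using PiLp.norm_apply_le x i
  · rw [hf, hf, if_pos rfl, if_neg (Ne.symm hi)]
    ring
  · rw [hf, hf, hf, if_pos rfl, if_neg (Ne.symm hi)]
    split_ifs <;> constructor <;> linarith

lemma isBSA_range_signVector {c : ℝ} (hc : 0 < c) (hball : ∀ σ : ι → Bool, ‖signVector p c σ‖ ≤ 1) :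
    IsBSA (Set.range (signVector (ι := ι) p c)) (2 * c) := by
  refine ⟨?_, ?_⟩
  · rintro _ ⟨σ, rfl⟩
    exact mem_closedBall_zero_iff.2 (hball σ)
  · rintro _ ⟨σ, rfl⟩ _ ⟨τ, rfl⟩ hστ
    obtain ⟨f, hf1, hgap, hf⟩ := exists_dual_signVector (p := p) hc (ne_of_apply_ne _ hστ)
    exact ⟨f, hf1, hgap.ge, by rintro _ ⟨ρ, rfl⟩; exact hf ρ⟩

end SignVectors

lemma Real.rpow_one_div_lt_of_logb_lt {b x p : ℝ} (hb : 1 < b) (hx : 0 < x) (hp : 0 < p)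
    (h : Real.logb b x < p) : x ^ (1 / p) < b := by
  rw [one_div, Real.rpow_inv_lt_iff_of_pos hx.le (by linarith) hp]
  exact (Real.logb_lt_iff_lt_rpow hb hx).1 h

/-- For `n ≥ 2` and `log₂ n < p < ∞`, one has
`H'_α(ℓ_p^n) = 2^n = H_α(ℓ_p^n)`; moreover the scaled sign-vector set
`S' = n^{-1/p}·{−1,1}^n` is a bounded and separated antipodal subset of the unit sphere
of `ℓ_p^n` of cardinality `2^n`, with constant `d = 2/n^{1/p} > 1`. -/
theorem strictHalpha_lp_eq_of_logb_lt (n : ℕ) (hn : 2 ≤ n) (p : ℝ) (hp : 1 < p)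
    (hplog : Real.logb 2 n < p) [Fact (1 ≤ ENNReal.ofReal p)]
    (S : Finset (PiLp (ENNReal.ofReal p) (fun _ : Fin n => ℝ)))
    (hS : S = Finset.image
      (fun σ : Fin n → Bool =>
        (WithLp.equiv (ENNReal.ofReal p) (∀ _ : Fin n, ℝ)).symm
          (fun i => (if σ i then 1 else -1) * ((n : ℝ) ^ (1 / p))⁻¹))
      Finset.univ) :
    S.card = 2 ^ n ∧
    (S : Set (PiLp (ENNReal.ofReal p) (fun _ : Fin n => ℝ))) ⊆ sphere 0 1 ∧
    1 < 2 / (n : ℝ) ^ (1 / p) ∧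
    IsBSA (S : Set (PiLp (ENNReal.ofReal p) (fun _ : Fin n => ℝ))) (2 / (n : ℝ) ^ (1 / p)) ∧
    strictHalpha (PiLp (ENNReal.ofReal p) (fun _ : Fin n => ℝ)) = 2 ^ n ∧
    Halpha (PiLp (ENNReal.ofReal p) (fun _ : Fin n => ℝ)) = 2 ^ n := by
  have hp0 : 0 < p := one_pos.trans hp
  have hn0 : (0 : ℝ) < n := by exact_mod_cast two_pos.trans_le hn
  have hroot : 0 < (n : ℝ) ^ (1 / p) := Real.rpow_pos_of_pos hn0 _
  set c := ((n : ℝ) ^ (1 / p))⁻¹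
  have hc : 0 < c := inv_pos.2 hroot
  replace hS : S = Finset.univ.image (signVector (ENNReal.ofReal p) c) := hS
  have hnorm (σ : Fin n → Bool) : ‖signVector (ENNReal.ofReal p) c σ‖ = 1 := by
    rw [norm_signVector ENNReal.ofReal_ne_top, ENNReal.toReal_ofReal hp0.le, Fintype.card_fin,
      abs_of_pos hc, mul_inv_cancel₀ hroot.ne']
  have hsphere : (S : Set (PiLp (ENNReal.ofReal p) (fun _ : Fin n => ℝ))) ⊆ sphere 0 1 := by
    simp [hS, hnorm, Set.range_subset_iff]
  have hcard : S.card = 2 ^ n := by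
    simp [hS, Finset.card_image_of_injective _ (signVector_injective hc.ne')]
  have hd : 1 < 2 / (n : ℝ) ^ (1 / p) :=
    (one_lt_div hroot).2 (Real.rpow_one_div_lt_of_logb_lt one_lt_two hn0 hp0 hplog)
  have hBSA : IsBSA (S : Set (PiLp (ENNReal.ofReal p) (fun _ : Fin n => ℝ)))
      (2 / (n : ℝ) ^ (1 / p)) := by
    rw [hS, Finset.coe_image, Finset.coe_univ, Set.image_univ, div_eq_mul_inv]
    exact isBSA_range_signVector hc fun σ ↦ (hnorm σ).le
  have hdim : finrank ℝ (PiLp (ENNReal.ofReal p) (fun _ : Fin n => ℝ)) = n := by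
    rw [Module.finrank_eq_card_basis (PiLp.basisFun _ ℝ (Fin n)), Fintype.card_fin]
  exact ⟨hcard, hsphere, hd, hBSA,
    strictHalpha_eq_two_pow hdim hsphere hcard (hBSA.strictAntipProp hd),
    Halpha_eq_two_pow hdim hsphere hcard (hBSA.strictAntipProp hd).antipProp⟩
end
end

section
/- Every two-dimensional real normed space (Minkowski plane) X admits an Auerbach basis {(e_i, e_i*) : i = 1, 2} such that ‖e_1 − e_2‖ > 1 and ‖e_1 + e_2‖ > 1. -/
/-!
Fix a nonzero alternating bilinear form `ω` on the plane. Any pair of unit vectors `(u, v)` with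
`ω u v = ‖ω‖` is an Auerbach basis: since `|ω x y| ≤ ‖ω‖ ‖x‖ ‖y‖`, the dual functionals
`ω (·) v / ‖ω‖` and `ω u (·) / ‖ω‖` have norm `1`. These norming pairs form a nonempty compact
set, and one maximizing `‖u + v‖ * ‖u - v‖` has `‖u - v‖ > 1`; applied to the norming pair
`(v, -u)`, which has the same product, this also gives `‖u + v‖ > 1`.
-/

open Metric

noncomputable section

def diagonalNormProduct {X : Type*} [SeminormedAddCommGroup X] (p : X × X) : ℝ :=
  ‖p.1 + p.2‖ * ‖p.1 - p.2‖

lemma continuous_diagonalNormProduct {X : Type*} [SeminormedAddCommGroup X] :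
    Continuous (diagonalNormProduct (X := X)) := by
  unfold diagonalNormProduct
  fun_prop

section NormingPairs

variable {X : Type*} [NormedAddCommGroup X] [NormedSpace ℝ X] (ω : X →L[ℝ] X →L[ℝ] ℝ)

def normingPairs : Set (X × X) := {p | ‖p.1‖ = 1 ∧ ‖p.2‖ = 1 ∧ ω p.1 p.2 = ‖ω‖}

def normingDual (u v : X) : Fin 2 → X →L[ℝ] ℝ := ![‖ω‖⁻¹ • ω.flip v, ‖ω‖⁻¹ • ω u]

variable {ω}

lemma apply_swap_of_apply_self (hω : ∀ x, ω x x = 0) (x y : X) : ω y x = -ω x y := by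
  have := hω (x + y)
  simp only [map_add, add_apply, hω] at this
  linarith

lemma le_norm_mul_norm_of_apply_eq (hpos : 0 < ‖ω‖) {x y : X} {k : ℝ}
    (h : ω x y = k * ‖ω‖) : k ≤ ‖x‖ * ‖y‖ := by
  have : k * ‖ω‖ ≤ ‖ω‖ * ‖x‖ * ‖y‖ := h ▸ (Real.le_norm_self _).trans (ω.le_opNorm₂ x y)
  nlinarith

lemma isCompact_normingPairs [ProperSpace X] : IsCompact (normingPairs ω) := by
  refine ((isCompact_sphere (0 : X) 1).prod (isCompact_sphere (0 : X) 1)).of_isClosed_subset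
    ?_ fun p hp => ⟨mem_sphere_zero_iff_norm.2 hp.1, mem_sphere_zero_iff_norm.2 hp.2.1⟩
  refine (isClosed_eq (by fun_prop) continuous_const).inter
    ((isClosed_eq (by fun_prop) continuous_const).inter (isClosed_eq ?_ continuous_const))
  exact ω.continuous₂.comp continuous_id

lemma normingPairs_nonempty [ProperSpace X] [Nontrivial X] : (normingPairs ω).Nonempty := by
  have hS : IsCompact (sphere (0 : X) 1 ×ˢ sphere (0 : X) 1) :=
    (isCompact_sphere 0 1).prod (isCompact_sphere 0 1)
  have hne : (sphere (0 : X) 1 ×ˢ sphere (0 : X) 1).Nonempty := by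
    have := (NormedSpace.sphere_nonempty (x := (0 : X))).2 zero_le_one
    exact this.prod this
  obtain ⟨q, ⟨hq₁, hq₂⟩, hmax⟩ :=
    hS.exists_isMaxOn hne (ω.continuous₂.comp continuous_id).continuousOn
  rw [mem_sphere_zero_iff_norm] at hq₁ hq₂
  have hbound : ∀ x y : X, ‖x‖ = 1 → ‖y‖ = 1 → ‖ω x y‖ ≤ ω q.1 q.2 := fun x y hx hy => by
    have hle : ∀ x : X, ‖x‖ = 1 → ω x y ≤ ω q.1 q.2 := fun x hx =>
      hmax (Set.mk_mem_prod (mem_sphere_zero_iff_norm.2 hx) (mem_sphere_zero_iff_norm.2 hy))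
    have hneg := hle (-x) (by rwa [norm_neg])
    rw [map_neg, neg_apply] at hneg
    exact abs_le.2 ⟨by linarith, hle x hx⟩
  have hc : 0 ≤ ω q.1 q.2 := (norm_nonneg _).trans (hbound _ _ hq₁ hq₂)
  refine ⟨q, hq₁, hq₂, le_antisymm ((Real.le_norm_self _).trans ?_) ?_⟩
  · simpa [hq₁, hq₂] using ω.le_opNorm₂ q.1 q.2
  · exact ContinuousLinearMap.opNorm_le_of_unit_norm hc fun x hx =>
      ContinuousLinearMap.opNorm_le_of_unit_norm hc fun y hy => hbound x y hx hy

/-- If `(u, v)` maximizes `‖u + v‖ * ‖u - v‖` among norming pairs, then `‖u - v‖ > 1`: otherwise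
`‖u - v‖ = 1` and `‖u + v‖ = 2`, and the norming pair `(u - v, (u + v) / 2)` has diagonals
`(3u - v) / 2` and `(u - 3v) / 2`, both of norm at least `3 / 2`, so a larger product `9 / 4`. -/
lemma one_lt_norm_sub_of_isMaxOn (hω : ∀ x, ω x x = 0) (hpos : 0 < ‖ω‖) {u v : X}
    (hq : (u, v) ∈ normingPairs ω) (hmax : IsMaxOn diagonalNormProduct (normingPairs ω) (u, v)) :
    1 < ‖u - v‖ := by
  obtain ⟨hu, hv, huv⟩ : ‖u‖ = 1 ∧ ‖v‖ = 1 ∧ ω u v = ‖ω‖ := hq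
  have hvu : ω v u = -‖ω‖ := by rw [apply_swap_of_apply_self hω, huv]
  have hsub : 1 ≤ ‖u - v‖ := by
    simpa [hv] using le_norm_mul_norm_of_apply_eq hpos
      (show ω (u - v) v = 1 * ‖ω‖ by simp [huv, hω])
  refine hsub.lt_of_ne fun hsub_eq => ?_
  have hadd : ‖u + v‖ = 2 := by
    have h2 : 2 ≤ ‖u - v‖ * ‖u + v‖ := le_norm_mul_norm_of_apply_eq hpos
      (show ω (u - v) (u + v) = 2 * ‖ω‖ by
        simp only [map_sub, sub_apply, map_add, hω, huv, zero_add, hvu, sub_neg_eq_add]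
        ring)
    have := norm_add_le u v
    rw [← hsub_eq] at h2
    linarith
  have hmem : (u - v, (2 : ℝ)⁻¹ • (u + v)) ∈ normingPairs ω := by
    refine ⟨hsub_eq.symm, by rw [norm_smul, hadd]; norm_num, ?_⟩
    simp only [map_sub, smul_add, sub_apply, map_add, map_smul, hω, smul_eq_mul, huv, zero_add,
      hvu, sub_neg_eq_add]
    ring
  have h3u : 3 ≤ ‖(3 : ℝ) • u - v‖ := by
    simpa [hv] using le_norm_mul_norm_of_apply_eq hpos
      (show ω ((3 : ℝ) • u - v) v = 3 * ‖ω‖ by simp [huv, hω])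
  have h3v : 3 ≤ ‖u - (3 : ℝ) • v‖ := by
    simpa [hu] using le_norm_mul_norm_of_apply_eq hpos
      (show ω (u - (3 : ℝ) • v) u = 3 * ‖ω‖ by simp [hvu, hω])
  have hdiag : diagonalNormProduct _ ≤ diagonalNormProduct (u, v) := hmax hmem
  simp only [diagonalNormProduct] at hdiag
  have e₁ : u - v + (2 : ℝ)⁻¹ • (u + v) = (2 : ℝ)⁻¹ • ((3 : ℝ) • u - v) := by module
  have e₂ : u - v - (2 : ℝ)⁻¹ • (u + v) = (2 : ℝ)⁻¹ • (u - (3 : ℝ) • v) := by module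
  rw [e₁, e₂, norm_smul, norm_smul, hadd, ← hsub_eq] at hdiag
  norm_num at hdiag
  nlinarith

lemma rotate_mem_normingPairs (hω : ∀ x, ω x x = 0) {u v : X} (h : (u, v) ∈ normingPairs ω) :
    (v, -u) ∈ normingPairs ω := by
  obtain ⟨hu, hv, huv⟩ := h
  exact ⟨hv, by rwa [norm_neg], by rw [map_neg, ← apply_swap_of_apply_self hω, huv]⟩

lemma one_lt_norm_add_of_isMaxOn (hω : ∀ x, ω x x = 0) (hpos : 0 < ‖ω‖) {u v : X}
    (hq : (u, v) ∈ normingPairs ω) (hmax : IsMaxOn diagonalNormProduct (normingPairs ω) (u, v)) :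
    1 < ‖u + v‖ := by
  have hrot : diagonalNormProduct (v, -u) = diagonalNormProduct (u, v) := by
    simp only [diagonalNormProduct]
    rw [sub_neg_eq_add, add_comm v u, mul_comm, ← norm_neg (v + -u), neg_add, neg_neg,
      neg_add_eq_sub]
  simpa [add_comm] using
    one_lt_norm_sub_of_isMaxOn hω hpos (rotate_mem_normingPairs hω hq) fun p hp => hrot ▸ hmax hp

lemma normingDual_apply (hω : ∀ x, ω x x = 0) (hpos : 0 < ‖ω‖) {u v : X}
    (hq : (u, v) ∈ normingPairs ω) (i j : Fin 2) :
    normingDual ω u v i (![u, v] j) = if i = j then 1 else 0 := by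
  obtain ⟨-, -, huv⟩ : ‖u‖ = 1 ∧ ‖v‖ = 1 ∧ ω u v = ‖ω‖ := hq
  fin_cases i <;> fin_cases j <;> simp [normingDual, huv, hω, hpos.ne']

lemma norm_normingDual (hpos : 0 < ‖ω‖) {u v : X} (hq : (u, v) ∈ normingPairs ω) (i : Fin 2) :
    ‖normingDual ω u v i‖ = 1 := by
  obtain ⟨hu, hv, huv⟩ : ‖u‖ = 1 ∧ ‖v‖ = 1 ∧ ω u v = ‖ω‖ := hq
  suffices ‖ω.flip v‖ = ‖ω‖ ∧ ‖ω u‖ = ‖ω‖ by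
    fin_cases i <;> simp [normingDual, norm_smul, this, hpos.ne', abs_of_pos hpos]
  refine ⟨le_antisymm ?_ ?_, le_antisymm ?_ ?_⟩
  · simpa [hv] using ω.flip.le_opNorm v
  · simpa [hu, huv, abs_of_pos hpos] using (ω.flip v).le_opNorm u
  · simpa [hu] using ω.le_opNorm u
  · simpa [hv, huv, abs_of_pos hpos] using (ω u).le_opNorm v

end NormingPairs

lemma exists_alternating_ne_zero {X : Type*} [NormedAddCommGroup X] [NormedSpace ℝ X]
    [FiniteDimensional ℝ X] (b : Module.Basis (Fin 2) ℝ X) :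
    ∃ ω : X →L[ℝ] X →L[ℝ] ℝ, (∀ x, ω x x = 0) ∧ ω ≠ 0 := by
  let c : Fin 2 → X →L[ℝ] ℝ := fun i => LinearMap.toContinuousLinearMap (b.coord i)
  refine ⟨(c 0).smulRight (c 1) - (c 1).smulRight (c 0), fun x => by simp [mul_comm], fun h => ?_⟩
  simpa [c] using congr($h (b 0) (b 1))

/-- Every Minkowski plane (two-dimensional real normed space) `X`
admits an Auerbach basis `{(b i, f i) : i = 1, 2}` with `‖b 0 − b 1‖ > 1` and
`‖b 0 + b 1‖ > 1`. -/
theorem exists_auerbach_basis_with_long_diagonals (X : Type*) [NormedAddCommGroup X]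
    [NormedSpace ℝ X] [FiniteDimensional ℝ X] (hdim : Module.finrank ℝ X = 2) :
    ∃ (b : Module.Basis (Fin 2) ℝ X) (f : Fin 2 → (X →L[ℝ] ℝ)),
      (∀ i, ‖b i‖ = 1) ∧ (∀ i, ‖f i‖ = 1) ∧
      (∀ i j, f i (b j) = if i = j then 1 else 0) ∧
      1 < ‖b 0 - b 1‖ ∧ 1 < ‖b 0 + b 1‖ := by
  have : Nontrivial X := Module.nontrivial_of_finrank_eq_succ hdim
  obtain ⟨ω, hω, hne⟩ := exists_alternating_ne_zero (Module.finBasisOfFinrankEq ℝ X hdim)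
  have hpos : 0 < ‖ω‖ := (norm_pos_iff (a := ω)).2 hne
  obtain ⟨⟨u, v⟩, hq, hmax⟩ := isCompact_normingPairs.exists_isMaxOn (normingPairs_nonempty (ω := ω))
    continuous_diagonalNormProduct.continuousOn
  have hdual := normingDual_apply hω hpos hq
  have hli : LinearIndependent ℝ ![u, v] :=
    .of_pairwise_dual_eq_zero_one _ (fun i => (normingDual ω u v i : X →ₗ[ℝ] ℝ))
      (fun i j hij => by simpa [hij] using hdual i j) (fun i => by simpa using hdual i i)
  let b := basisOfLinearIndependentOfCardEqFinrank hli (by simp [hdim])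
  have hb : ⇑b = ![u, v] := coe_basisOfLinearIndependentOfCardEqFinrank hli _
  refine ⟨b, normingDual ω u v, ?_, norm_normingDual hpos hq, by simpa [hb] using hdual, ?_, ?_⟩
  · simpa [Fin.forall_fin_two, hb] using And.intro hq.1 hq.2.1
  · simpa [hb] using one_lt_norm_sub_of_isMaxOn hω hpos hq hmax
  · simpa [hb] using one_lt_norm_add_of_isMaxOn hω hpos hq hmax
end
end
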